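/- arXiv:1611.03286 — 2 statements merged into one kernel-verified Lean document; each statement's English description precedes it below -/
import Mathlib

section
/- Let G be the generating function of a branching random walk on a countable set X, let q̄ ∈ [0,1]^X be the pointwise limit of the iterates q_0 := 𝟎, q_{n+1} := G(q_n), and fix x ∈ X. The following are equivalent: (1) q̄(x) < 1; (2) there exists q ∈ [0,1]^X with q(x) < 1 and G(q)(y) ≤ q(y) for all y ∈ X; (3) there exists q ∈ [0,1]^X with q(x) < 1 and G(q)(y) = q(y) for all y ∈ X. -/
open Filter

/-- The generating function of a branching random walk on `X` with offspring
distributions `ν x` on the set of finitely supported functions `X →₀ ℕ`: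
`G(q|x) = ∑_f ν_x(f) ∏_y q(y)^{f(y)}`. -/
noncomputable def brwG {X : Type*} (ν : X → (X →₀ ℕ) → ℝ) (q : X → ℝ) (x : X) : ℝ :=
  ∑' f : X →₀ ℕ, ν x f * f.prod fun y k => q y ^ k

/-- The iterates `q_0 := 0`, `q_{n+1} := G(q_n)`. -/
noncomputable def brwIter {X : Type*} (ν : X → (X →₀ ℕ) → ℝ) : ℕ → X → ℝ
  | 0 => fun _ => 0
  | n + 1 => brwG ν (brwIter ν n)

section aux

variable {X : Type*} (ν : X → (X →₀ ℕ) → ℝ)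

lemma brw_prod_mem {q : X → ℝ} (hq : ∀ y, q y ∈ Set.Icc (0 : ℝ) 1) (f : X →₀ ℕ) :
    (f.prod fun y k => q y ^ k) ∈ Set.Icc (0 : ℝ) 1 := by
  constructor
  · exact Finset.prod_nonneg fun y _ => pow_nonneg (hq y).1 _
  · exact Finset.prod_le_one (fun y _ => pow_nonneg (hq y).1 _)
      (fun y _ => pow_le_one₀ (hq y).1 (hq y).2)

lemma brw_summable (hν0 : ∀ x f, 0 ≤ ν x f) (hν1 : ∀ x, HasSum (ν x) 1)
    {q : X → ℝ} (hq : ∀ y, q y ∈ Set.Icc (0 : ℝ) 1) (x : X) :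
    Summable fun f : X →₀ ℕ => ν x f * f.prod fun y k => q y ^ k := by
  refine (hν1 x).summable.of_nonneg_of_le
    (fun f => mul_nonneg (hν0 x f) (brw_prod_mem hq f).1) (fun f => ?_)
  calc ν x f * f.prod (fun y k => q y ^ k) ≤ ν x f * 1 :=
        mul_le_mul_of_nonneg_left (brw_prod_mem hq f).2 (hν0 x f)
    _ = ν x f := mul_one _

lemma brwG_mem (hν0 : ∀ x f, 0 ≤ ν x f) (hν1 : ∀ x, HasSum (ν x) 1)
    {q : X → ℝ} (hq : ∀ y, q y ∈ Set.Icc (0 : ℝ) 1) (x : X) :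
    brwG ν q x ∈ Set.Icc (0 : ℝ) 1 := by
  constructor
  · exact tsum_nonneg fun f => mul_nonneg (hν0 x f) (brw_prod_mem hq f).1
  · have h1 : (1 : ℝ) = ∑' f, ν x f := (hν1 x).tsum_eq.symm
    rw [brwG, h1]
    refine Summable.tsum_le_tsum (fun f => ?_) (brw_summable ν hν0 hν1 hq x) (hν1 x).summable
    calc ν x f * f.prod (fun y k => q y ^ k) ≤ ν x f * 1 :=
          mul_le_mul_of_nonneg_left (brw_prod_mem hq f).2 (hν0 x f)
      _ = ν x f := mul_one _

lemma brwG_mono (hν0 : ∀ x f, 0 ≤ ν x f) (hν1 : ∀ x, HasSum (ν x) 1)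
    {q q' : X → ℝ} (hq : ∀ y, q y ∈ Set.Icc (0 : ℝ) 1)
    (hq' : ∀ y, q' y ∈ Set.Icc (0 : ℝ) 1) (hle : ∀ y, q y ≤ q' y) (x : X) :
    brwG ν q x ≤ brwG ν q' x := by
  refine Summable.tsum_le_tsum (fun f => ?_) (brw_summable ν hν0 hν1 hq x)
    (brw_summable ν hν0 hν1 hq' x)
  refine mul_le_mul_of_nonneg_left ?_ (hν0 x f)
  exact Finset.prod_le_prod (fun y _ => pow_nonneg (hq y).1 _)
    (fun y _ => pow_le_pow_left₀ (hq y).1 (hle y) _)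

lemma brwIter_mem (hν0 : ∀ x f, 0 ≤ ν x f) (hν1 : ∀ x, HasSum (ν x) 1) (n : ℕ) :
    ∀ y, brwIter ν n y ∈ Set.Icc (0 : ℝ) 1 := by
  induction n with
  | zero => intro y; simp [brwIter]
  | succ n ih => exact fun y => brwG_mem ν hν0 hν1 ih y

end aux

/-- for a fixed `x`, global survival starting from `x` (`q̄(x) < 1`) is
equivalent to the existence of `q ∈ [0,1]^X` with `q(x) < 1` and `G(q) ≤ q`, and also
to the existence of `q ∈ [0,1]^X` with `q(x) < 1` and `G(q) = q`. -/
theorem brw_survival_characterization {X : Type*} [Countable X]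
    (ν : X → (X →₀ ℕ) → ℝ)
    (hν0 : ∀ x f, 0 ≤ ν x f) (hν1 : ∀ x, HasSum (ν x) 1)
    (qbar : X → ℝ)
    (hqbar : ∀ x, Tendsto (fun n => brwIter ν n x) atTop (nhds (qbar x)))
    (x : X) :
    (qbar x < 1 ↔
      ∃ q : X → ℝ, (∀ y, q y ∈ Set.Icc (0 : ℝ) 1) ∧ q x < 1 ∧ ∀ y, brwG ν q y ≤ q y) ∧
    (qbar x < 1 ↔
      ∃ q : X → ℝ, (∀ y, q y ∈ Set.Icc (0 : ℝ) 1) ∧ q x < 1 ∧ ∀ y, brwG ν q y = q y) := by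
  -- qbar is in [0,1]
  have hqbar_mem : ∀ y, qbar y ∈ Set.Icc (0 : ℝ) 1 := fun y => by
    constructor
    · exact ge_of_tendsto (hqbar y) (Eventually.of_forall fun n =>
        (brwIter_mem ν hν0 hν1 n y).1)
    · exact le_of_tendsto (hqbar y) (Eventually.of_forall fun n =>
        (brwIter_mem ν hν0 hν1 n y).2)
  -- G(qbar) = qbar by dominated convergence
  have hfix : ∀ y, brwG ν qbar y = qbar y := by
    intro y
    have hconv : Tendsto (fun n => brwG ν (brwIter ν n) y) atTop (nhds (brwG ν qbar y)) := by
      refine tendsto_tsum_of_dominated_convergence (hν1 y).summable (fun f => ?_)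
        (Eventually.of_forall fun n f => ?_)
      · refine Tendsto.const_mul _ ?_
        exact tendsto_finset_prod _ fun z _ => (hqbar z).pow _
      · rw [Real.norm_eq_abs, abs_of_nonneg (mul_nonneg (hν0 y f)
          (brw_prod_mem (brwIter_mem ν hν0 hν1 n) f).1)]
        calc ν y f * f.prod (fun z k => brwIter ν n z ^ k) ≤ ν y f * 1 :=
              mul_le_mul_of_nonneg_left
                (brw_prod_mem (brwIter_mem ν hν0 hν1 n) f).2 (hν0 y f)
          _ = ν y f := mul_one _
    have hconv' : Tendsto (fun n => brwIter ν (n + 1) y) atTop (nhds (qbar y)) :=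
      (hqbar y).comp (tendsto_add_atTop_nat 1)
    exact tendsto_nhds_unique hconv hconv'
  -- (2) ⇒ (1)
  have h21 : (∃ q : X → ℝ, (∀ y, q y ∈ Set.Icc (0 : ℝ) 1) ∧ q x < 1 ∧
      ∀ y, brwG ν q y ≤ q y) → qbar x < 1 := by
    rintro ⟨q, hq, hqx, hle⟩
    have hiter : ∀ n y, brwIter ν n y ≤ q y := by
      intro n
      induction n with
      | zero => intro y; simpa [brwIter] using (hq y).1
      | succ n ih =>
        intro y
        calc brwIter ν (n + 1) y = brwG ν (brwIter ν n) y := rfl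
          _ ≤ brwG ν q y := brwG_mono ν hν0 hν1 (brwIter_mem ν hν0 hν1 n) hq ih y
          _ ≤ q y := hle y
    have : qbar x ≤ q x :=
      le_of_tendsto (hqbar x) (Eventually.of_forall fun n => hiter n x)
    exact lt_of_le_of_lt this hqx
  constructor
  · constructor
    · intro h
      exact ⟨qbar, hqbar_mem, h, fun y => (hfix y).le⟩
    · exact h21
  · constructor
    · intro h
      exact ⟨qbar, hqbar_mem, h, hfix⟩
    · rintro ⟨q, hq, hqx, heq⟩
      exact h21 ⟨q, hq, hqx, fun y => (heq y).le⟩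
end

section
/- Let (Ω, 𝓕, P) be a probability space and (A_i)_{i∈ℕ} a sequence of measurable events. Then P(⋂_{i=0}^∞ A_i) > 0 if and only if both of the following hold: (a) P(A_i^c | ⋂_{j=0}^{i−1} A_j) < 1 for every i ≥ 0, and (b) ∑_{i=0}^∞ P(A_i^c | ⋂_{j=0}^{i−1} A_j) < ∞. Here the intersection over the empty index set is Ω, so the i = 0 term is P(A_0^c), and the conditional probability given an event of probability zero is taken to be 0 (under condition (a) every conditioning event ⋂_{j<i} A_j automatically has positive probability, so this convention plays no role). -/
/-!
Write `b n = P(⋂_{j<n} A_j)` and `q n = P(A_nᶜ | ⋂_{j<n} A_j)`. Then `q n * b n + b (n + 1) = b n`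
(also when `b n = 0`, where the conditional probability is `0`), so `b` decreases to `P(⋂ A_i)` and the sum of `q i * b i` over `N ≤ i < n` telescopes to
`b N - b n`. If `inf b > 0`, bounding `b i` below by `inf b` gives `(∑ q) * inf b ≤ 1`; and a
vanishing `b (n + 1)` forces `q n ≥ 1`. Conversely, choosing `N` with tail sum `t = ∑_{i ≥ N} q i < 1`
and bounding `b i` above by `b N` gives `b n ≥ (1 - t) b N` for all `n ≥ N`, while `q < 1` keeps
every `b N` positive.
-/

open MeasureTheory ProbabilityTheory Finset
open scoped ENNReal

section Telescoping

variable {b q : ℕ → ℝ≥0∞}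

theorem antitone_of_mul_add_eq (hb : ∀ n, q n * b n + b (n + 1) = b n) : Antitone b :=
  antitone_nat_of_succ_le fun n => (hb n).symm ▸ le_add_self

theorem sum_Ico_mul_add_eq (hb : ∀ n, q n * b n + b (n + 1) = b n) {m n : ℕ} (hmn : m ≤ n) :
    ∑ i ∈ Ico m n, q i * b i + b n = b m := by
  induction n, hmn using Nat.le_induction with
  | base => simp
  | succ n hmn ih => rw [sum_Ico_succ_top hmn, add_assoc, hb, ih]

theorem lt_one_iff_succ_ne_zero (hb : ∀ n, q n * b n + b (n + 1) = b n) {n : ℕ}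
    (h0 : b n ≠ 0) (hfin : b n ≠ ⊤) : q n < 1 ↔ b (n + 1) ≠ 0 := by
  constructor
  · intro hq hsucc
    have hloss : q n * b n = b n := by simpa [hsucc] using hb n
    exact (ENNReal.mul_lt_mul_left h0 hfin hq).ne (by rw [hloss, one_mul])
  · intro hsucc
    by_contra! hq
    have hle : q n * b n + b (n + 1) ≤ q n * b n + 0 := by
      rw [hb n, add_zero]
      exact le_mul_of_one_le_left' hq
    have hfin' : q n * b n ≠ ⊤ := ne_top_of_le_ne_top hfin (le_self_add.trans_eq (hb n))
    exact hsucc (nonpos_iff_eq_zero.mp ((ENNReal.add_le_add_iff_left hfin').mp hle))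

theorem ne_zero_of_forall_lt_one (hb : ∀ n, q n * b n + b (n + 1) = b n) (h0 : b 0 ≠ 0)
    (hfin : b 0 ≠ ⊤) (hq : ∀ n, q n < 1) (n : ℕ) : b n ≠ 0 := by
  induction n with
  | zero => exact h0
  | succ n ih =>
    have hfin_n : b n ≠ ⊤ := ne_top_of_le_ne_top hfin (antitone_of_mul_add_eq hb n.zero_le)
    exact (lt_one_iff_succ_ne_zero hb ih hfin_n).mp (hq n)

theorem tsum_mul_iInf_le (hb : ∀ n, q n * b n + b (n + 1) = b n) :
    (∑' n, q n) * ⨅ n, b n ≤ b 0 := by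
  rw [← ENNReal.tsum_mul_right]
  refine ENNReal.tsum_le_of_sum_range_le fun N => ?_
  calc ∑ n ∈ range N, q n * ⨅ k, b k
      ≤ ∑ n ∈ Ico 0 N, q n * b n := by
        rw [range_eq_Ico]
        gcongr
        exact iInf_le _ _
    _ ≤ ∑ n ∈ Ico 0 N, q n * b n + b N := le_self_add
    _ = b 0 := sum_Ico_mul_add_eq hb N.zero_le

theorem le_add_mul_tsum_of_le (hb : ∀ n, q n * b n + b (n + 1) = b n) {N n : ℕ} (hNn : N ≤ n) :
    b N ≤ b n + b N * ∑' k, q (k + N) := by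
  have hsum : ∑ i ∈ Ico N n, q i ≤ ∑' k, q (k + N) := by
    rw [sum_Ico_eq_sum_range]
    simp_rw [add_comm N]
    exact ENNReal.sum_le_tsum _
  calc b N = ∑ i ∈ Ico N n, q i * b i + b n := (sum_Ico_mul_add_eq hb hNn).symm
    _ ≤ ∑ i ∈ Ico N n, q i * b N + b n := by
        gcongr with i hi
        exact antitone_of_mul_add_eq hb (mem_Ico.mp hi).1
    _ ≤ b n + b N * ∑' k, q (k + N) := by
        rw [← sum_mul, add_comm, mul_comm]
        gcongr

theorem iInf_pos_of_tsum_lt_top (hb : ∀ n, q n * b n + b (n + 1) = b n) (h0 : b 0 ≠ 0)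
    (hfin : b 0 ≠ ⊤) (hq : ∀ n, q n < 1) (hsum : ∑' n, q n < ⊤) : 0 < ⨅ n, b n := by
  obtain ⟨N, hN⟩ : ∃ N, ∑' k, q (k + N) < 1 :=
    ((ENNReal.tendsto_sum_nat_add q hsum.ne).eventually (gt_mem_nhds zero_lt_one)).exists
  have hfin_N : b N ≠ ⊤ := ne_top_of_le_ne_top hfin (antitone_of_mul_add_eq hb N.zero_le)
  have hlower : ∀ n, b N * (1 - ∑' k, q (k + N)) ≤ b n := fun n =>
    calc b N * (1 - ∑' k, q (k + N)) = b N - b N * ∑' k, q (k + N) := by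
          rw [ENNReal.mul_sub fun _ _ => hfin_N, mul_one]
      _ ≤ b (max n N) := tsub_le_iff_right.mpr (le_add_mul_tsum_of_le hb (le_max_right n N))
      _ ≤ b n := antitone_of_mul_add_eq hb (le_max_left n N)
  refine lt_of_lt_of_le ?_ (le_iInf hlower)
  exact ENNReal.mul_pos (ne_zero_of_forall_lt_one hb h0 hfin hq N) (tsub_pos_of_lt hN).ne'

theorem iInf_pos_iff_forall_lt_one_and_tsum_lt_top (hb : ∀ n, q n * b n + b (n + 1) = b n)
    (h0 : b 0 ≠ 0) (hfin : b 0 ≠ ⊤) :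
    0 < ⨅ n, b n ↔ (∀ n, q n < 1) ∧ ∑' n, q n < ⊤ := by
  refine ⟨fun hpos => ⟨fun n => ?_, ?_⟩, fun h => iInf_pos_of_tsum_lt_top hb h0 hfin h.1 h.2⟩
  · have hle : ∀ k, ⨅ n, b n ≤ b k := iInf_le b
    refine (lt_one_iff_succ_ne_zero hb (hpos.trans_le (hle n)).ne' ?_).mpr
      (hpos.trans_le (hle (n + 1))).ne'
    exact ne_top_of_le_ne_top hfin (antitone_of_mul_add_eq hb n.zero_le)
  · exact ENNReal.lt_top_of_mul_ne_top_left
      (ne_top_of_le_ne_top hfin (tsum_mul_iInf_le hb)) hpos.ne'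

end Telescoping

theorem cond_compl_mul_add_measure_inter {Ω : Type*} [MeasurableSpace Ω] (μ : Measure Ω)
    [IsFiniteMeasure μ] {s t : Set Ω} (hs : MeasurableSet s) (ht : MeasurableSet t) :
    μ[tᶜ | s] * μ s + μ (s ∩ t) = μ s := by
  rw [cond_mul_eq_inter hs, add_comm]
  exact measure_inter_add_sdiff s ht

theorem Finset.set_biInter_range_add_one {α : Type*} (A : ℕ → Set α) (n : ℕ) :
    ⋂ j ∈ range (n + 1), A j = (⋂ j ∈ range n, A j) ∩ A n := by
  rw [range_add_one, set_biInter_insert, Set.inter_comm]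

theorem measure_iInter_eq_iInf_measure_biInter_range {Ω : Type*} [MeasurableSpace Ω]
    (μ : Measure Ω) [IsFiniteMeasure μ] {A : ℕ → Set Ω} (hA : ∀ i, MeasurableSet (A i)) :
    μ (⋂ i, A i) = ⨅ n, μ (⋂ j ∈ range n, A j) := by
  have hiInter : ⋂ i, A i = ⋂ n, ⋂ j ∈ range n, A j := by
    ext x
    simp only [Set.mem_iInter, mem_range]
    exact ⟨fun h n j _ => h j, fun h i => h (i + 1) i (Nat.lt_add_one i)⟩
  rw [hiInter]
  refine Antitone.measure_iInter (fun m n hmn => ?_) (fun n => ?_) ⟨0, measure_ne_top μ _⟩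
  · exact Set.biInter_subset_biInter_left (by simpa using range_subset_range.mpr hmn)
  · exact (MeasurableSet.biInter (range n).countable_toSet fun j _ => hA j).nullMeasurableSet

/-- for events `(A_i)` in a probability space,
`P(⋂_i A_i) > 0` iff `P(A_i^c | ⋂_{j<i} A_j) < 1` for every `i` and
`∑_i P(A_i^c | ⋂_{j<i} A_j) < ∞`. Here `ProbabilityTheory.cond P s` is the
conditional measure `P(· ∩ s)/P(s)`, which is the zero measure when `P s = 0`
(matching the convention in the statement), and `⋂ j ∈ Finset.range 0, A j = univ`. -/
theorem inter_pos_iff_cond_compl_summable {Ω : Type*} [MeasurableSpace Ω]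
    (P : Measure Ω) [IsProbabilityMeasure P]
    (A : ℕ → Set Ω) (hA : ∀ i, MeasurableSet (A i)) :
    0 < P (⋂ i, A i) ↔
      ((∀ i : ℕ, ProbabilityTheory.cond P (⋂ j ∈ Finset.range i, A j) (A i)ᶜ < 1) ∧
        ∑' i : ℕ, ProbabilityTheory.cond P (⋂ j ∈ Finset.range i, A j) (A i)ᶜ < ⊤) := by
  have hstep : ∀ n, P[(A n)ᶜ | ⋂ j ∈ range n, A j] * P (⋂ j ∈ range n, A j)
      + P (⋂ j ∈ range (n + 1), A j) = P (⋂ j ∈ range n, A j) := fun n => by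
    rw [set_biInter_range_add_one]
    exact cond_compl_mul_add_measure_inter P
      (MeasurableSet.biInter (range n).countable_toSet fun j _ => hA j) (hA n)
  rw [measure_iInter_eq_iInf_measure_biInter_range P hA]
  exact iInf_pos_iff_forall_lt_one_and_tsum_lt_top hstep (by simp) (measure_ne_top P _)
end
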